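/- Burchnall's reduction of F4 on the diagonal: F4(a; b; c1, c2; x, x) = 4F3(a, b, (c1+c2)/2, (c1+c2-1)/2; c1, c2, c1+c2-1; 4x), as an identity of analytic functions of x near 0. -/

import Mathlib

noncomputable def poch (a : ℂ) (n : ℕ) : ℂ := (ascPochhammer ℂ n).eval a

noncomputable def hpg21 (A B C z : ℂ) : ℂ :=
  ∑' n : ℕ, poch A n * poch B n / (poch C n * (n.factorial : ℂ)) * z ^ n

noncomputable def F4 (a b c1 c2 x y : ℂ) : ℂ :=
  ∑' p : ℕ × ℕ, poch a (p.1 + p.2) * poch b (p.1 + p.2) /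
    (poch c1 p.1 * poch c2 p.2 * (p.1.factorial : ℂ) * (p.2.factorial : ℂ)) * x ^ p.1 * y ^ p.2

noncomputable def hpg43 (A1 A2 A3 A4 B1 B2 B3 z : ℂ) : ℂ :=
  ∑' n : ℕ, poch A1 n * poch A2 n * poch A3 n * poch A4 n /
    (poch B1 n * poch B2 n * poch B3 n * (n.factorial : ℂ)) * z ^ n

/-!
Group the double series by total degree `N = n + m`. On the diagonal the coefficient of `x ^ N` is
`(a)_N (b)_N ∑_{n+m=N} 1 / ((c₁)_n (c₂)_m n! m!)`; multiplied by `(c₁)_N (c₂)_N N!`, the inner sum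
becomes `∑ C(N,n) (c₁+n)_m (c₂+m)_n`, the Chu–Vandermonde sum of falling factorials at `c₂+N-1` and
`c₁+N-1`, which equals `(c₁+c₂+N-1)_N`. With `c = c₁+c₂-1`, the duplication formula
`(c)_N (c+N)_N = (c)_{2N} = 4^N (c/2)_N ((c+1)/2)_N` turns this into the `₄F₃` coefficient.
The regrouping is justified by absolute convergence near `0`, which follows from
`‖(c)_n‖ ≥ μ^n n!` for `c ∉ -ℕ`.
-/

open Finset
open scoped Nat

theorem Summable.tsum_eq_tsum_sum_antidiagonal {A α : Type*} [AddCommMonoid A]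
    [HasAntidiagonal A] [AddCommMonoid α] [TopologicalSpace α] [ContinuousAdd α] [T3Space α]
    {f : A × A → α} (hf : Summable f) :
    ∑' p, f p = ∑' n, ∑ p ∈ antidiagonal n, f p := by
  conv_rhs => congr; ext; rw [← Finset.sum_finset_coe, ← tsum_fintype (L := .unconditional _)]
  rw [← HasAntidiagonal.sigmaAntidiagonalEquivProd.tsum_eq f]
  exact (HasAntidiagonal.sigmaAntidiagonalEquivProd.summable_iff.mpr hf).tsum_sigma'
    fun n ↦ (hasSum_fintype _).summable

lemma poch_zero (c : ℂ) : poch c 0 = 1 := by simp [poch]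

lemma poch_succ (c : ℂ) (n : ℕ) : poch c (n + 1) = poch c n * (c + n) := by
  simp [poch, ascPochhammer_succ_eval]

lemma poch_add (c : ℂ) (n m : ℕ) : poch c (n + m) = poch c n * poch (c + n) m := by
  simpa [poch, Polynomial.eval_comp] using
    (congrArg (Polynomial.eval c) (ascPochhammer_mul ℂ n m)).symm

lemma poch_ne_zero {c : ℂ} (hc : ∀ k : ℕ, c ≠ -k) (n : ℕ) : poch c n ≠ 0 := by
  induction n with
  | zero => simp [poch_zero]
  | succ n ih => exact poch_succ c n ▸ mul_ne_zero ih fun h ↦ hc n (eq_neg_of_add_eq_zero_left h)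

lemma poch_two_mul (c : ℂ) (n : ℕ) :
    poch c (2 * n) = 4 ^ n * poch (c / 2) n * poch ((c + 1) / 2) n := by
  induction n with
  | zero => simp [poch_zero]
  | succ n ih =>
    rw [show 2 * (n + 1) = 2 * n + 1 + 1 by ring, poch_succ, poch_succ, ih, poch_succ, poch_succ]
    push_cast
    ring

lemma poch_mul_poch_add_self (c : ℂ) (n : ℕ) :
    poch c n * poch (c + n) n = 4 ^ n * poch (c / 2) n * poch ((c + 1) / 2) n := by
  rw [← poch_add, ← two_mul, poch_two_mul]

lemma descPochhammer_smeval_eq_poch (r : ℂ) (n : ℕ) :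
    (descPochhammer ℤ n).smeval r = poch (r - n + 1) n := by
  rw [Polynomial.descPochhammer_smeval_eq_ascPochhammer, Polynomial.ascPochhammer_smeval_eq_eval,
    poch]

lemma sum_antidiagonal_choose_mul_poch (c₁ c₂ : ℂ) (N : ℕ) :
    ∑ p ∈ antidiagonal N, (N.choose p.1 : ℂ) * (poch (c₂ + p.2) p.1 * poch (c₁ + p.1) p.2) =
      poch (c₁ + c₂ + N - 1) N := by
  have h := Ring.descPochhammer_smeval_add (r := c₂ + N - 1) (s := c₁ + N - 1) N (Commute.all _ _)
  rw [descPochhammer_smeval_eq_poch] at h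
  convert h.symm using 1
  · refine sum_congr rfl fun ⟨n, m⟩ hp ↦ ?_
    rw [HasAntidiagonal.mem_antidiagonal] at hp
    subst hp
    simp only [descPochhammer_smeval_eq_poch, Nat.cast_add]
    ring_nf
  · ring_nf

lemma sum_antidiagonal_inv_poch_mul_poch {c₁ c₂ : ℂ} (hc₁ : ∀ k : ℕ, c₁ ≠ -k)
    (hc₂ : ∀ k : ℕ, c₂ ≠ -k) (N : ℕ) :
    ∑ p ∈ antidiagonal N, (poch c₁ p.1 * poch c₂ p.2 * (p.1 ! : ℂ) * (p.2 ! : ℂ))⁻¹ =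
      poch (c₁ + c₂ + N - 1) N / (poch c₁ N * poch c₂ N * (N ! : ℂ)) := by
  rw [← sum_antidiagonal_choose_mul_poch, sum_div]
  refine sum_congr rfl fun ⟨n, m⟩ hp ↦ ?_
  rw [HasAntidiagonal.mem_antidiagonal] at hp
  subst hp
  have hfac : ((n + m)! : ℂ) = (n + m).choose n * n ! * m ! := by
    rw [Nat.choose_symm_add]; exact_mod_cast (Nat.add_choose_mul_factorial_mul_factorial n m).symm
  have h₁ : poch c₁ (n + m) = poch c₁ n * poch (c₁ + n) m := poch_add c₁ n m
  have h₂ : poch c₂ (n + m) = poch c₂ m * poch (c₂ + m) n := by rw [add_comm, poch_add]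
  obtain ⟨-, h₁0⟩ := mul_ne_zero_iff.mp (h₁ ▸ poch_ne_zero hc₁ (n + m))
  obtain ⟨-, h₂0⟩ := mul_ne_zero_iff.mp (h₂ ▸ poch_ne_zero hc₂ (n + m))
  have := poch_ne_zero hc₁ n
  have := poch_ne_zero hc₂ m
  have : ((n + m).choose n : ℂ) ≠ 0 := by exact_mod_cast (Nat.choose_pos (by omega)).ne'
  rw [h₁, h₂, hfac]
  field_simp

noncomputable def F4Term (a b c₁ c₂ x y : ℂ) (p : ℕ × ℕ) : ℂ :=
  poch a (p.1 + p.2) * poch b (p.1 + p.2) /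
    (poch c₁ p.1 * poch c₂ p.2 * (p.1 ! : ℂ) * (p.2 ! : ℂ)) * x ^ p.1 * y ^ p.2

noncomputable def hpg43Term (A₁ A₂ A₃ A₄ B₁ B₂ B₃ z : ℂ) (n : ℕ) : ℂ :=
  poch A₁ n * poch A₂ n * poch A₃ n * poch A₄ n /
    (poch B₁ n * poch B₂ n * poch B₃ n * (n ! : ℂ)) * z ^ n

lemma F4_eq_tsum_F4Term (a b c₁ c₂ x y : ℂ) :
    F4 a b c₁ c₂ x y = ∑' p, F4Term a b c₁ c₂ x y p := rfl

lemma hpg43_eq_tsum_hpg43Term (A₁ A₂ A₃ A₄ B₁ B₂ B₃ z : ℂ) :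
    hpg43 A₁ A₂ A₃ A₄ B₁ B₂ B₃ z = ∑' n, hpg43Term A₁ A₂ A₃ A₄ B₁ B₂ B₃ z n := rfl

lemma sum_antidiagonal_F4Term_diag (a b : ℂ) {c₁ c₂ : ℂ} (hc₁ : ∀ k : ℕ, c₁ ≠ -k)
    (hc₂ : ∀ k : ℕ, c₂ ≠ -k) (hc₃ : ∀ k : ℕ, c₁ + c₂ - 1 ≠ -k) (x : ℂ) (N : ℕ) :
    ∑ p ∈ antidiagonal N, F4Term a b c₁ c₂ x x p =
      hpg43Term a b ((c₁ + c₂) / 2) ((c₁ + c₂ - 1) / 2) c₁ c₂ (c₁ + c₂ - 1) (4 * x) N := by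
  have hterm : ∀ p ∈ antidiagonal N, F4Term a b c₁ c₂ x x p = poch a N * poch b N * x ^ N *
      (poch c₁ p.1 * poch c₂ p.2 * (p.1 ! : ℂ) * (p.2 ! : ℂ))⁻¹ := by
    rintro ⟨n, m⟩ hp
    rw [HasAntidiagonal.mem_antidiagonal] at hp
    subst hp
    rw [F4Term, pow_add]
    ring
  have hdup := poch_mul_poch_add_self (c₁ + c₂ - 1) N
  rw [show c₁ + c₂ - 1 + N = c₁ + c₂ + N - 1 by ring,
    show (c₁ + c₂ - 1 + 1) / 2 = (c₁ + c₂) / 2 by ring] at hdup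
  have := poch_ne_zero hc₁ N
  have := poch_ne_zero hc₂ N
  have := poch_ne_zero hc₃ N
  have : (N ! : ℂ) ≠ 0 := mod_cast N.factorial_ne_zero
  rw [sum_congr rfl hterm, ← mul_sum, sum_antidiagonal_inv_poch_mul_poch hc₁ hc₂, hpg43Term]
  field_simp
  linear_combination (poch a N * poch b N * x ^ N) * hdup

lemma exists_pos_mul_succ_le_norm_add_natCast {c : ℂ} (hc : ∀ k : ℕ, c ≠ -k) :
    ∃ μ > 0, ∀ k : ℕ, μ * (k + 1) ≤ ‖c + k‖ := by
  obtain ⟨K, hK⟩ := exists_nat_ge (2 * ‖c‖ + 1)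
  set f : ℕ → ℝ := fun k ↦ ‖c + k‖ / (k + 1)
  have hf_pos (k : ℕ) : 0 < f k :=
    div_pos (norm_pos_iff.2 fun h ↦ hc k (eq_neg_of_add_eq_zero_left h)) (by positivity)
  obtain ⟨k₀, -, hk₀⟩ := (range (K + 1)).exists_min_image f nonempty_range_add_one
  refine ⟨min (f k₀) (1 / 2), lt_min (hf_pos k₀) one_half_pos, fun k ↦ ?_⟩
  rcases le_or_gt k K with hk | hk
  · calc min (f k₀) (1 / 2) * (k + 1) ≤ f k * (k + 1) := by
          gcongr
          exact (min_le_left _ _).trans (hk₀ k (mem_range.2 (Nat.lt_succ_of_le hk)))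
      _ = ‖c + k‖ := div_mul_cancel₀ _ (by positivity)
  · have hKk : (K : ℝ) ≤ k := by exact_mod_cast hk.le
    calc min (f k₀) (1 / 2) * (k + 1) ≤ 1 / 2 * (k + 1) := by gcongr; exact min_le_right _ _
      _ ≤ ‖(k : ℂ)‖ - ‖c‖ := by rw [Complex.norm_natCast]; linarith
      _ ≤ ‖c + k‖ := by
          rw [sub_le_iff_le_add]
          simpa using norm_sub_le (c + k) c

lemma exists_pos_pow_mul_factorial_le_norm_poch {c : ℂ} (hc : ∀ k : ℕ, c ≠ -k) :
    ∃ μ > 0, ∀ n : ℕ, μ ^ n * n ! ≤ ‖poch c n‖ := by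
  obtain ⟨μ, hμ, hle⟩ := exists_pos_mul_succ_le_norm_add_natCast hc
  refine ⟨μ, hμ, fun n ↦ ?_⟩
  induction n with
  | zero => simp [poch_zero]
  | succ n ih =>
    rw [poch_succ, norm_mul, pow_succ, Nat.factorial_succ, Nat.cast_mul, Nat.cast_succ]
    calc μ ^ n * μ * ((n + 1) * n !) = μ ^ n * n ! * (μ * (n + 1)) := by ring
      _ ≤ ‖poch c n‖ * ‖c + n‖ := by gcongr; exact hle n

lemma norm_poch_le (a : ℂ) (n : ℕ) : ‖poch a n‖ ≤ (‖a‖ + 1) ^ n * n ! := by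
  induction n with
  | zero => simp [poch_zero]
  | succ n ih =>
    rw [poch_succ, norm_mul, pow_succ, Nat.factorial_succ, Nat.cast_mul, Nat.cast_succ]
    have hlin : ‖a + n‖ ≤ (‖a‖ + 1) * (n + 1) := by
      calc ‖a + n‖ ≤ ‖a‖ + n := by simpa using norm_add_le a n
        _ ≤ (‖a‖ + 1) * (n + 1) := by nlinarith [norm_nonneg a]
    calc ‖poch a n‖ * ‖a + n‖ ≤ (‖a‖ + 1) ^ n * n ! * ((‖a‖ + 1) * (n + 1)) := by gcongr
      _ = _ := by ring

lemma norm_poch_add_le (a : ℂ) (n m : ℕ) :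
    ‖poch a (n + m)‖ ≤ (2 * (‖a‖ + 1)) ^ (n + m) * (n ! * m !) := by
  have hfac : ((n + m)! : ℝ) ≤ 2 ^ (n + m) * (n ! * m !) := by
    rw [← Nat.add_choose_mul_factorial_mul_factorial, mul_assoc]
    push_cast
    gcongr
    exact_mod_cast Nat.choose_le_two_pow _ _
  calc ‖poch a (n + m)‖ ≤ (‖a‖ + 1) ^ (n + m) * (n + m)! := norm_poch_le a _
    _ ≤ (‖a‖ + 1) ^ (n + m) * (2 ^ (n + m) * (n ! * m !)) := by gcongr
    _ = _ := by rw [mul_pow]; ring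

lemma norm_F4Term_le (a b : ℂ) {c₁ c₂ : ℂ} {μ : ℝ} (hμ : 0 < μ)
    (hc₁ : ∀ n : ℕ, μ ^ n * n ! ≤ ‖poch c₁ n‖) (hc₂ : ∀ n : ℕ, μ ^ n * n ! ≤ ‖poch c₂ n‖)
    (x y : ℂ) (p : ℕ × ℕ) :
    ‖F4Term a b c₁ c₂ x y p‖ ≤
      (2 * (‖a‖ + 1) * (2 * (‖b‖ + 1)) * ‖x‖ / μ) ^ p.1 *
        (2 * (‖a‖ + 1) * (2 * (‖b‖ + 1)) * ‖y‖ / μ) ^ p.2 := by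
  obtain ⟨n, m⟩ := p
  have hden : μ ^ n * n ! * (μ ^ m * m !) * n ! * m ! ≤
      ‖poch c₁ n * poch c₂ m * (n ! : ℂ) * (m ! : ℂ)‖ := by
    simp only [norm_mul, Complex.norm_natCast]
    gcongr
    exacts [hc₁ n, hc₂ m]
  calc ‖F4Term a b c₁ c₂ x y (n, m)‖
      = ‖poch a (n + m)‖ * ‖poch b (n + m)‖ /
          ‖poch c₁ n * poch c₂ m * (n ! : ℂ) * (m ! : ℂ)‖ * ‖x‖ ^ n * ‖y‖ ^ m := by
        simp only [F4Term, norm_mul, norm_div, norm_pow]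
    _ ≤ (2 * (‖a‖ + 1)) ^ (n + m) * (n ! * m !) * ((2 * (‖b‖ + 1)) ^ (n + m) * (n ! * m !)) /
          (μ ^ n * n ! * (μ ^ m * m !) * n ! * m !) * ‖x‖ ^ n * ‖y‖ ^ m := by
        gcongr
        exacts [norm_poch_add_le a n m, norm_poch_add_le b n m]
    _ = _ := by
        simp only [div_pow, mul_pow, pow_add]
        field_simp

lemma summable_F4Term (a b : ℂ) {c₁ c₂ : ℂ} (hc₁ : ∀ k : ℕ, c₁ ≠ -k) (hc₂ : ∀ k : ℕ, c₂ ≠ -k) :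
    ∃ ε > 0, ∀ x y : ℂ, ‖x‖ < ε → ‖y‖ < ε → Summable (F4Term a b c₁ c₂ x y) := by
  obtain ⟨μ₁, hμ₁, h₁⟩ := exists_pos_pow_mul_factorial_le_norm_poch hc₁
  obtain ⟨μ₂, hμ₂, h₂⟩ := exists_pos_pow_mul_factorial_le_norm_poch hc₂
  set μ := min μ₁ μ₂
  have hμ : 0 < μ := lt_min hμ₁ hμ₂
  have hle {ν : ℝ} (hν : μ ≤ ν) {c : ℂ} (h : ∀ n : ℕ, ν ^ n * n ! ≤ ‖poch c n‖) (n : ℕ) :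
      μ ^ n * n ! ≤ ‖poch c n‖ :=
    le_trans (by gcongr) (h n)
  set K := 2 * (‖a‖ + 1) * (2 * (‖b‖ + 1))
  have hK : 0 < K := by positivity
  have hratio {z : ℂ} (hz : ‖z‖ < μ / K) : K * ‖z‖ / μ < 1 := by
    rw [div_lt_one hμ]
    rwa [lt_div_iff₀ hK, mul_comm] at hz
  refine ⟨μ / K, by positivity, fun x y hx hy ↦ ?_⟩
  have hgeom : Summable fun p : ℕ × ℕ ↦ (K * ‖x‖ / μ) ^ p.1 * (K * ‖y‖ / μ) ^ p.2 :=
    (summable_geometric_of_lt_one (by positivity) (hratio hx)).mul_of_nonneg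
      (summable_geometric_of_lt_one (by positivity) (hratio hy))
      (fun _ ↦ by positivity) (fun _ ↦ by positivity)
  exact Summable.of_norm_bounded hgeom
    (norm_F4Term_le a b hμ (hle (min_le_left _ _) h₁) (hle (min_le_right _ _) h₂) x y)

theorem F4_diagonal_Burchnall (a b c1 c2 : ℂ) (hc1 : ∀ n : ℕ, c1 ≠ -(n : ℂ))
    (hc2 : ∀ n : ℕ, c2 ≠ -(n : ℂ)) (hc3 : ∀ n : ℕ, c1 + c2 - 1 ≠ -(n : ℂ)) :
    ∃ ε > (0 : ℝ), ∀ x : ℂ, ‖x‖ < ε →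
      F4 a b c1 c2 x x =
        hpg43 a b ((c1 + c2) / 2) ((c1 + c2 - 1) / 2) c1 c2 (c1 + c2 - 1) (4 * x) := by
  obtain ⟨ε, hε, hsummable⟩ := summable_F4Term a b hc1 hc2
  refine ⟨ε, hε, fun x hx ↦ ?_⟩
  rw [F4_eq_tsum_F4Term, (hsummable x x hx hx).tsum_eq_tsum_sum_antidiagonal,
    hpg43_eq_tsum_hpg43Term]
  exact tsum_congr (sum_antidiagonal_F4Term_diag a b hc1 hc2 hc3 x)
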